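/- arXiv:1102.1021 — 2 statements merged into one kernel-verified Lean document; each statement's English description precedes it below -/
import Mathlib

section
/- For n ≥ 4 and 0 < ε ≤ 1, the graph F_n (as constructed) satisfies Δ_ε(F_n) = ⌊ n − 1 − ε + ε·⌈(n−1)/2⌉ ⌋, where Δ_ε(G) = ⌊ max over edges uv of ((1−ε)·min{d(u),d(v)} + ε·max{d(u),d(v)}) ⌋. -/
/-! In `Fn n` the ends `x = inl 0` and `y = inl 1` of the missing edge have degrees
`n - 2 + ⌊(n - 1)/2⌋` and `n - 2 + ⌈(n - 1)/2⌉`, and every other vertex has degree `n - 1`.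
As `x` and `y` are not adjacent, every edge has an end of degree `n - 1`, and no degree exceeds
`d(y)`. The weight `(1 - ε) min + ε max` is monotone in both degrees, so its maximum is attained
on an edge from `y` to another vertex of `K_n`, where it equals
`(1 - ε)(n - 1) + ε(n - 2 + ⌈(n - 1)/2⌉)`. -/

open SimpleGraph Classical

/-- Chromatic number as a natural number. -/
noncomputable def chromNum {V : Type*} [Fintype V] (G : SimpleGraph V) : ℕ :=
  sInf {n | G.Colorable n}

/-- Degree of a vertex. -/
noncomputable def deg {V : Type*} [Fintype V] (G : SimpleGraph V) (v : V) : ℕ :=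
  (G.neighborSet v).ncard

/-- Maximum degree. -/
noncomputable def maxDeg {V : Type*} [Fintype V] (G : SimpleGraph V) : ℕ :=
  sSup {d | ∃ v, d = deg G v}

/-- Δ₂ : max over edges of the min of the endpoint degrees. -/
noncomputable def delta2 {V : Type*} [Fintype V] (G : SimpleGraph V) : ℕ :=
  sSup {d | ∃ u v, G.Adj u v ∧ d = min (deg G u) (deg G v)}

/-- Ore degree. -/
noncomputable def theta {V : Type*} [Fintype V] (G : SimpleGraph V) : ℕ :=
  sSup {d | ∃ u v, G.Adj u v ∧ d = deg G u + deg G v}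

/-- Vertex-critical graph. -/
noncomputable def critical {V : Type*} [Fintype V] (G : SimpleGraph V) : Prop :=
  ∀ v : V, chromNum (G.induce {u | u ≠ v}) < chromNum G

noncomputable def deltaEps {V : Type*} [Fintype V] (ε : ℝ) (G : SimpleGraph V) : ℕ :=
  ⌊sSup {x : ℝ | ∃ u v, G.Adj u v ∧
      x = (1 - ε) * (min (deg G u) (deg G v) : ℕ) + ε * (max (deg G u) (deg G v) : ℕ)}⌋₊

def FnRel (n : ℕ) : Fin n ⊕ Fin (n - 1) → Fin n ⊕ Fin (n - 1) → Prop
  | Sum.inl i, Sum.inl j => ¬((i : ℕ) = 0 ∧ (j : ℕ) = 1) ∧ ¬((i : ℕ) = 1 ∧ (j : ℕ) = 0)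
  | Sum.inr _, Sum.inr _ => True
  | Sum.inl i, Sum.inr a => ((i : ℕ) = 0 ∧ (a : ℕ) < (n - 1) / 2) ∨ ((i : ℕ) = 1 ∧ (n - 1) / 2 ≤ (a : ℕ))
  | Sum.inr _, Sum.inl _ => False

def Fn (n : ℕ) : SimpleGraph (Fin n ⊕ Fin (n - 1)) := SimpleGraph.fromRel (FnRel n)

open Finset Sum

lemma deg_eq_card_filter_inl_add_card_filter_inr {α β : Type*} [Fintype α] [Fintype β]
    (G : SimpleGraph (α ⊕ β)) (v : α ⊕ β) :
    deg G v = #{a | G.Adj v (inl a)} + #{b | G.Adj v (inr b)} := by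
  rw [deg, Set.ncard_eq_toFinset_card', ← card_disjSum]
  congr 1
  ext (a | b) <;> simp

lemma Fin.card_filter_le_val {n m : ℕ} : #{i : Fin n | m ≤ (i : ℕ)} = n - m := by
  have := card_filter_add_card_filter_not (s := (univ : Finset (Fin n))) (fun i => (i : ℕ) < m)
  simp only [not_lt, Fin.card_filter_val_lt, card_univ, Fintype.card_fin] at this
  omega

namespace Fn
variable {n : ℕ}

lemma adj_inl_inl {i j : Fin n} : (Fn n).Adj (inl i) (inl j) ↔
    i ≠ j ∧ ¬((i : ℕ) = 0 ∧ (j : ℕ) = 1) ∧ ¬((i : ℕ) = 1 ∧ (j : ℕ) = 0) := by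
  simp only [Fn, fromRel_adj, FnRel, ne_eq, inl.injEq]
  tauto

lemma adj_inl_inr {i : Fin n} {a : Fin (n - 1)} : (Fn n).Adj (inl i) (inr a) ↔
    ((i : ℕ) = 0 ∧ (a : ℕ) < (n - 1) / 2) ∨ ((i : ℕ) = 1 ∧ (n - 1) / 2 ≤ (a : ℕ)) := by
  simp [Fn, FnRel]

lemma adj_inr_inr {a b : Fin (n - 1)} : (Fn n).Adj (inr a) (inr b) ↔ a ≠ b := by
  simp [Fn, FnRel]

lemma deg_inl_of_two_le {i : Fin n} (hi : 2 ≤ (i : ℕ)) : deg (Fn n) (inl i) = n - 1 := by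
  have hi0 : (i : ℕ) ≠ 0 := by omega
  have hi1 : (i : ℕ) ≠ 1 := by omega
  rw [deg_eq_card_filter_inl_add_card_filter_inr]
  simp [adj_inl_inl, adj_inl_inr, hi0, hi1, ne_comm (a := i), filter_ne']

lemma deg_inl_zero {i : Fin n} (hi : (i : ℕ) = 0) : deg (Fn n) (inl i) = n - 2 + (n - 1) / 2 := by
  rw [deg_eq_card_filter_inl_add_card_filter_inr]
  have hx : ∀ x : Fin n, (i ≠ x ∧ (x : ℕ) ≠ 1 ↔ 2 ≤ (x : ℕ)) := by
    intro x; rw [Ne, Fin.ext_iff]; omega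
  simp [adj_inl_inl, adj_inl_inr, hi, hx, Fin.card_filter_le_val, Fin.card_filter_val_lt,
    Nat.div_le_self]

lemma deg_inl_one {i : Fin n} (hi : (i : ℕ) = 1) :
    deg (Fn n) (inl i) = n - 2 + (n - 1 - (n - 1) / 2) := by
  rw [deg_eq_card_filter_inl_add_card_filter_inr]
  have hx : ∀ x : Fin n, (i ≠ x ∧ (x : ℕ) ≠ 0 ↔ 2 ≤ (x : ℕ)) := by
    intro x; rw [Ne, Fin.ext_iff]; omega
  simp [adj_inl_inl, adj_inl_inr, hi, hx, Fin.card_filter_le_val]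

lemma deg_inr (hn : 2 ≤ n) (a : Fin (n - 1)) : deg (Fn n) (inr a) = n - 1 := by
  obtain ⟨j, hj⟩ : ∃ j : Fin n, ∀ i, (Fn n).Adj (inl i) (inr a) ↔ i = j := by
    by_cases h : (a : ℕ) < (n - 1) / 2
    · exact ⟨⟨0, by omega⟩, fun i => by simp only [adj_inl_inr, Fin.ext_iff]; omega⟩
    · exact ⟨⟨1, by omega⟩, fun i => by simp only [adj_inl_inr, Fin.ext_iff]; omega⟩
  rw [deg_eq_card_filter_inl_add_card_filter_inr]
  simp only [(Fn n).adj_comm (inr a), hj, adj_inr_inr, filter_eq', filter_ne', mem_univ,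
    if_true, card_singleton, card_erase_of_mem, card_univ, Fintype.card_fin]
  omega

lemma deg_le (hn : 2 ≤ n) (v : Fin n ⊕ Fin (n - 1)) :
    deg (Fn n) v ≤ n - 2 + (n - 1 - (n - 1) / 2) := by
  rcases v with i | a
  · by_cases hi : 2 ≤ (i : ℕ)
    · rw [deg_inl_of_two_le hi]; omega
    · interval_cases hi' : (i : ℕ)
      · rw [deg_inl_zero hi']; omega
      · rw [deg_inl_one hi']
  · rw [deg_inr hn a]; omega

lemma deg_le_of_adj (hn : 2 ≤ n) {u v : Fin n ⊕ Fin (n - 1)} (h : (Fn n).Adj u v) :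
    deg (Fn n) u ≤ n - 1 ∨ deg (Fn n) v ≤ n - 1 := by
  rcases u with i | a
  · rcases v with j | b
    · rw [adj_inl_inl, Ne, Fin.ext_iff] at h
      by_cases hi : 2 ≤ (i : ℕ)
      · exact .inl (deg_inl_of_two_le hi).le
      · exact .inr (deg_inl_of_two_le (by omega)).le
    · exact .inr (deg_inr hn b).le
  · exact .inl (deg_inr hn a).le

end Fn

section WeightedEdgeDegree
variable {V : Type*} [Fintype V] {G : SimpleGraph V} {ε : ℝ} {m M : ℕ}

lemma mul_min_add_mul_max_le (h0 : 0 ≤ ε) (h1 : ε ≤ 1) {a b : ℕ} (ha : min a b ≤ m)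
    (hb : max a b ≤ M) :
    (1 - ε) * (min a b : ℕ) + ε * (max a b : ℕ) ≤ (1 - ε) * m + ε * M := by
  have : 0 ≤ 1 - ε := by linarith
  gcongr

theorem deltaEps_eq_floor_of_extremal_edge (h0 : 0 ≤ ε) (h1 : ε ≤ 1)
    (hmax : ∀ v, deg G v ≤ M) (hmin : ∀ ⦃u v⦄, G.Adj u v → deg G u ≤ m ∨ deg G v ≤ m)
    {u v : V} (huv : G.Adj u v) (hu : deg G u = M) (hv : deg G v = m) :
    deltaEps ε G = ⌊(1 - ε) * m + ε * M⌋₊ := by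
  have hmM : m ≤ M := hv ▸ hmax v
  rw [deltaEps, IsGreatest.csSup_eq]
  refine ⟨⟨u, v, huv, by rw [hu, hv, min_eq_right hmM, max_eq_left hmM]⟩, ?_⟩
  rintro _ ⟨u', v', huv', rfl⟩
  refine mul_min_add_mul_max_le h0 h1 ?_ (max_le (hmax u') (hmax v'))
  rcases hmin huv' with h | h
  exacts [min_le_of_left_le h, min_le_of_right_le h]

end WeightedEdgeDegree

lemma Int.ceil_natCast_div_two {K : Type*} [Field K] [LinearOrder K] [IsStrictOrderedRing K]
    [FloorRing K] (m : ℕ) : ⌈(m : K) / 2⌉ = ((m - m / 2 : ℕ) : ℤ) := by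
  rw [Int.ceil_eq_iff]
  obtain ⟨k, rfl | rfl⟩ := Nat.even_or_odd' m
  · rw [show 2 * k - 2 * k / 2 = k by omega]; push_cast; constructor <;> linarith
  · rw [show 2 * k + 1 - (2 * k + 1) / 2 = k + 1 by omega]; push_cast; constructor <;> linarith

theorem stmt13 (n : ℕ) (hn : 4 ≤ n) (ε : ℝ) (h0 : 0 < ε) (h1 : ε ≤ 1) :
    deltaEps ε (Fn n) = ⌊(n : ℝ) - 1 - ε + ε * (⌈((n : ℝ) - 1) / 2⌉ : ℝ)⌋₊ := by
  have hn2 : 2 ≤ n := by omega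
  have hyz : (Fn n).Adj (inl ⟨1, by omega⟩) (inl ⟨2, by omega⟩) := by simp [Fn.adj_inl_inl]
  rw [deltaEps_eq_floor_of_extremal_edge h0.le h1 (Fn.deg_le hn2) (fun _ _ => Fn.deg_le_of_adj hn2)
      hyz (Fn.deg_inl_one rfl) (Fn.deg_inl_of_two_le le_rfl),
    ← Nat.cast_pred (by omega), Int.ceil_natCast_div_two, Int.cast_natCast,
    Nat.cast_add, Nat.cast_sub (by omega : 2 ≤ n), Nat.cast_sub (by omega : 1 ≤ n)]
  congr 1
  push_cast
  ring
end

section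
/- If G is a finite simple graph with at least one edge such that χ(G) > Δ₂(G) and G is vertex-critical, then the set of vertices of degree at least χ(G) in G forms an independent set, and every vertex of degree at least χ(G) has all its neighbors of degree exactly χ(G) − 1. -/
open SimpleGraph Classical

/-! An edge always has an endpoint of degree at most Δ₂ < χ, so two vertices of degree ≥ χ are
never adjacent, and every neighbour of such a vertex has degree < χ. Criticality gives degree
≥ χ − 1 everywhere: a vertex `v` of smaller degree could be given a colour missing from its
neighbourhood in a (χ − 1)-colouring of `G − v`. -/

section

variable {V : Type*} [Fintype V] (G : SimpleGraph V)

lemma colorable_chromNum : G.Colorable (chromNum G) :=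
  Nat.sInf_mem (s := {n | G.Colorable n}) ⟨Fintype.card V, G.colorable_of_fintype⟩

lemma chromNum_le_of_colorable {n : ℕ} (h : G.Colorable n) : chromNum G ≤ n :=
  Nat.sInf_le h

lemma min_deg_le_delta2 {u v : V} (h : G.Adj u v) : min (deg G u) (deg G v) ≤ delta2 G := by
  refine le_csSup ⟨Nat.card V, ?_⟩ ⟨u, v, h, rfl⟩
  rintro d ⟨a, b, -, rfl⟩
  exact (min_le_left _ _).trans (Set.ncard_le_card _)

lemma colorable_of_colorable_induce_ne {v : V} {n : ℕ}
    (hC : (G.induce {u | u ≠ v}).Colorable n) (hdeg : deg G v < n) : G.Colorable n := by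
  obtain ⟨C⟩ := hC
  let neighborColor : G.neighborSet v → Fin n := fun u => C ⟨u, u.2.ne'⟩
  obtain ⟨c, hc⟩ : ∃ c, c ∉ Set.range neighborColor := by
    by_contra! hsurj
    have := Nat.card_le_card_of_surjective neighborColor hsurj
    rw [Nat.card_fin, Nat.card_coe_set_eq] at this
    exact hdeg.not_ge this
  refine ⟨Coloring.mk (fun u => if h : u = v then c else C ⟨u, h⟩) fun {a b} hab => ?_⟩
  by_cases ha : a = v <;> by_cases hb : b = v
  · exact (G.ne_of_adj hab (ha.trans hb.symm)).elim
  · subst ha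
    simpa [hb] using fun heq => hc ⟨⟨b, hab⟩, heq.symm⟩
  · subst hb
    simpa [ha] using fun heq => hc ⟨⟨a, hab.symm⟩, heq⟩
  · simpa [ha, hb] using C.valid (show (G.induce {u | u ≠ v}).Adj ⟨a, ha⟩ ⟨b, hb⟩ from hab)

lemma chromNum_sub_one_le_deg (hcrit : critical G) (v : V) : chromNum G - 1 ≤ deg G v := by
  by_contra! hlow
  have hv := hcrit v
  have hcol : G.Colorable (chromNum G - 1) :=
    colorable_of_colorable_induce_ne G ((colorable_chromNum _).mono (by omega)) hlow
  have := chromNum_le_of_colorable G hcol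
  omega

end

theorem stmt19_general {V : Type*} [Fintype V] (G : SimpleGraph V)
    (hcrit : critical G) (h : delta2 G < chromNum G) :
    (∀ u v, chromNum G ≤ deg G u → chromNum G ≤ deg G v → ¬ G.Adj u v) ∧
    (∀ u v, chromNum G ≤ deg G u → G.Adj u v → deg G v = chromNum G - 1) := by
  refine ⟨fun u v hu hv hadj => ?_, fun u v hu hadj => ?_⟩
  · have := min_deg_le_delta2 G hadj
    omega
  · have := min_deg_le_delta2 G hadj
    have := chromNum_sub_one_le_deg G hcrit v
    omega

theorem stmt19 {V : Type*} [Fintype V] (G : SimpleGraph V)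
    (he : ∃ u v, G.Adj u v) (hcrit : critical G) (h : delta2 G < chromNum G) :
    (∀ u v, chromNum G ≤ deg G u → chromNum G ≤ deg G v → ¬ G.Adj u v) ∧
    (∀ u v, chromNum G ≤ deg G u → G.Adj u v → deg G v = chromNum G - 1) :=
  stmt19_general G hcrit h
end
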